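/- arXiv:1002.2993 — 5 statements merged into one kernel-verified Lean document; each statement's English description precedes it below -/
import Mathlib

section
/- For nonzero u, v ∈ ℂ², the point [Π(u,v)] of ℂP² lies on the conic Q = {[z] : z₁² + z₂² + z₃² = 0} if and only if u and v are linearly dependent over ℂ (i.e. [u] = [v] in ℂP¹). In other words, Π maps the diagonal of ℂP¹ × ℂP¹ into Q and maps its complement into the complement of Q. -/
/-!
Up to the factor `i² = -1`, the first coordinate of `Π(u,v)` is `u₁v₁ + u₂v₂`, so the quadric
`z₁² + z₂² + z₃²` pulls back to `(u₁v₁ - u₂v₂)² + (u₁v₂ + u₂v₁)² - (u₁v₁ + u₂v₂)²`, which is the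
square of the determinant `u₁v₂ - u₂v₁`. For nonzero vectors of `ℂ²` this determinant vanishes
exactly when they are proportional.
-/

/-- The map `Π : ℂ² × ℂ² → ℂ³` inducing the 2-to-1 branched cover
`ℂP¹ × ℂP¹ → ℂP²` ramified over the conic `z₁² + z₂² + z₃² = 0`. -/
noncomputable def PiMap (u v : ℂ × ℂ) : ℂ × ℂ × ℂ :=
  (Complex.I * (u.1 * v.1 + u.2 * v.2), u.1 * v.1 - u.2 * v.2, u.1 * v.2 + u.2 * v.1)

theorem piMap_sq_sum_eq_det_sq (u v : ℂ × ℂ) :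
    (PiMap u v).1 ^ 2 + (PiMap u v).2.1 ^ 2 + (PiMap u v).2.2 ^ 2
      = (u.1 * v.2 - u.2 * v.1) ^ 2 := by
  simp only [PiMap]
  linear_combination (u.1 * v.1 + u.2 * v.2) ^ 2 * Complex.I_sq

section Proportional

variable {K : Type*} [Field K]

theorem Prod.exists_smul_eq_of_mul_eq_mul {u v : K × K} (hu : u.1 ≠ 0) (hv : v ≠ 0)
    (h : u.1 * v.2 = u.2 * v.1) : ∃ c : K, c ≠ 0 ∧ v = c • u := by
  have hv₁ : v.1 ≠ 0 := by
    intro hv₁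
    rw [hv₁, mul_zero, mul_eq_zero, or_iff_right hu] at h
    exact hv (Prod.ext hv₁ h)
  refine ⟨v.1 / u.1, div_ne_zero hv₁ hu, Prod.ext ?_ ?_⟩
  · simp only [Prod.smul_fst, smul_eq_mul, div_mul_cancel₀ _ hu]
  · simp only [Prod.smul_snd, smul_eq_mul]
    field_simp
    linear_combination h

theorem Prod.mul_sub_mul_eq_zero_iff_exists_smul_eq {u v : K × K} (hu : u ≠ 0) (hv : v ≠ 0) :
    u.1 * v.2 - u.2 * v.1 = 0 ↔ ∃ c : K, c ≠ 0 ∧ v = c • u := by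
  constructor
  · intro h
    rw [sub_eq_zero] at h
    by_cases hu₁ : u.1 = 0
    · have hu₂ : u.2 ≠ 0 := fun hu₂ => hu (Prod.ext hu₁ hu₂)
      obtain ⟨c, hc, hvc⟩ := Prod.exists_smul_eq_of_mul_eq_mul (u := u.swap) (v := v.swap) hu₂
        (fun hv₀ => hv (by simpa using congrArg Prod.swap hv₀)) (by simpa using h.symm)
      exact ⟨c, hc, by simpa using congrArg Prod.swap hvc⟩
    · exact Prod.exists_smul_eq_of_mul_eq_mul hu₁ hv h
  · rintro ⟨c, -, rfl⟩
    simp only [Prod.smul_fst, Prod.smul_snd, smul_eq_mul]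
    ring

end Proportional

/-- `[Π(u,v)]` lies on the conic `Q` iff `u` and `v` are linearly dependent,
i.e. `[u] = [v]` in `ℂP¹`. -/
theorem stmt1 (u v : ℂ × ℂ) (hu : u ≠ 0) (hv : v ≠ 0) :
    (PiMap u v).1 ^ 2 + (PiMap u v).2.1 ^ 2 + (PiMap u v).2.2 ^ 2 = 0 ↔
      ∃ c : ℂ, c ≠ 0 ∧ v = c • u := by
  rw [piMap_sq_sum_eq_det_sq, pow_eq_zero_iff two_ne_zero]
  exact Prod.mul_sub_mul_eq_zero_iff_exists_smul_eq hu hv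
end

section
/- The induced map ℂP¹ × ℂP¹ → ℂP² determined by Π has fibers equal to the orbits of the factor-switching involution ϱ(u,v) = (v,u): for nonzero u, v, u′, v′ ∈ ℂ², one has [Π(u,v)] = [Π(u′,v′)] in ℂP² if and only if ([u] = [u′] and [v] = [v′]) or ([u] = [v′] and [v] = [u′]) in ℂP¹. In particular Π is two-to-one away from the diagonal. -/
/-- `[u] = [u']` in `ℂP¹`: the nonzero vectors `u, u' ∈ ℂ²` represent the same
projective class. -/
def ProjEq2 (u u' : ℂ × ℂ) : Prop := ∃ c : ℂ, c ≠ 0 ∧ u' = c • u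

/-- `[z] = [z']` in `ℂP²`: the nonzero vectors `z, z' ∈ ℂ³` represent the same
projective class. -/
def ProjEq3 (z z' : ℂ × ℂ × ℂ) : Prop := ∃ c : ℂ, c ≠ 0 ∧ z' = c • z

theorem eq_and_eq_or_eq_and_eq_of_add_eq_add_of_mul_eq_mul {R : Type*} [CommRing R]
    [NoZeroDivisors R] {x y a b : R} (hs : x + y = a + b) (hp : x * y = a * b) :
    x = a ∧ y = b ∨ x = b ∧ y = a := by
  have hroot : (x - a) * (x - b) = 0 := by linear_combination x * hs - hp
  rcases mul_eq_zero.mp hroot with h | h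
  · exact .inl ⟨by linear_combination h, by linear_combination hs - h⟩
  · exact .inr ⟨by linear_combination h, by linear_combination hs - h⟩

theorem exists_smul_eq_of_smul_eq_smul {K V : Type*} [Field K] [AddCommGroup V] [Module K V]
    {x y : V} {a b : K} (hx : x ≠ 0) (hb : b ≠ 0) (h : a • y = b • x) :
    ∃ c : K, c ≠ 0 ∧ y = c • x := by
  have ha : a ≠ 0 := by
    rintro rfl
    exact smul_ne_zero hb hx (by rw [← h, zero_smul])
  exact ⟨a⁻¹ * b, mul_ne_zero (inv_ne_zero ha) hb, by rw [mul_smul, ← h, inv_smul_smul₀ ha]⟩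

theorem piMap_smul_smul (a b : ℂ) (u v : ℂ × ℂ) :
    PiMap (a • u) (b • v) = (a * b) • PiMap u v := by
  simp only [PiMap, Prod.smul_fst, Prod.smul_snd, Prod.smul_mk, smul_eq_mul, Prod.mk.injEq]
  exact ⟨by ring, by ring, by ring⟩

theorem piMap_comm (u v : ℂ × ℂ) : PiMap u v = PiMap v u := by
  simp only [PiMap, Prod.mk.injEq]
  exact ⟨by ring, by ring, by ring⟩

theorem piMap_eq_smul_iff (c : ℂ) (u v u' v' : ℂ × ℂ) :
    PiMap u' v' = c • PiMap u v ↔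
      u'.1 * v'.1 = c * (u.1 * v.1) ∧ u'.2 * v'.2 = c * (u.2 * v.2) ∧
        u'.1 * v'.2 + u'.2 * v'.1 = c * (u.1 * v.2 + u.2 * v.1) := by
  simp only [PiMap, Prod.smul_mk, smul_eq_mul, Prod.mk.injEq]
  constructor
  · rintro ⟨hI, hM, hS⟩
    have hA : u'.1 * v'.1 + u'.2 * v'.2 = c * (u.1 * v.1 + u.2 * v.2) :=
      mul_left_cancel₀ Complex.I_ne_zero (by linear_combination hI)
    exact ⟨by linear_combination (hA + hM) / 2, by linear_combination (hA - hM) / 2, hS⟩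
  · rintro ⟨h₁, h₂, hS⟩
    exact ⟨by linear_combination Complex.I * (h₁ + h₂), by linear_combination h₁ - h₂, hS⟩

theorem projEq2_of_smul_eq_smul {u v u' v' : ℂ × ℂ} {c : ℂ} (hu : u ≠ 0) (hv : v ≠ 0)
    (hc : c ≠ 0) (h₁ : v'.1 • u' = (c * v.1) • u) (h₂ : v'.2 • u' = (c * v.2) • u) :
    ProjEq2 u u' := by
  obtain hv₁ | hv₂ : v.1 ≠ 0 ∨ v.2 ≠ 0 := by
    contrapose! hv
    exact Prod.ext hv.1 hv.2
  · exact exists_smul_eq_of_smul_eq_smul hu (mul_ne_zero hc hv₁) h₁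
  · exact exists_smul_eq_of_smul_eq_smul hu (mul_ne_zero hc hv₂) h₂

theorem projEq2_and_projEq2_of_mul_eq_mul {u v u' v' : ℂ × ℂ} {c : ℂ} (hu : u ≠ 0)
    (hv : v ≠ 0) (hc : c ≠ 0)
    (h₁₁ : u'.1 * v'.1 = c * (u.1 * v.1)) (h₁₂ : u'.1 * v'.2 = c * (u.1 * v.2))
    (h₂₁ : u'.2 * v'.1 = c * (u.2 * v.1)) (h₂₂ : u'.2 * v'.2 = c * (u.2 * v.2)) :
    ProjEq2 u u' ∧ ProjEq2 v v' := by
  constructor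
  · refine projEq2_of_smul_eq_smul (v' := v') hu hv hc (Prod.ext ?_ ?_) (Prod.ext ?_ ?_) <;>
      simp only [Prod.smul_fst, Prod.smul_snd, smul_eq_mul]
    · linear_combination h₁₁
    · linear_combination h₂₁
    · linear_combination h₁₂
    · linear_combination h₂₂
  · refine projEq2_of_smul_eq_smul (v' := u') hv hu hc (Prod.ext ?_ ?_) (Prod.ext ?_ ?_) <;>
      simp only [Prod.smul_fst, Prod.smul_snd, smul_eq_mul]
    · linear_combination h₁₁
    · linear_combination h₁₂
    · linear_combination h₂₁
    · linear_combination h₂₂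

theorem stmt3_general (u v u' v' : ℂ × ℂ) (hu : u ≠ 0) (hv : v ≠ 0) :
    ProjEq3 (PiMap u v) (PiMap u' v') ↔
      (ProjEq2 u u' ∧ ProjEq2 v v') ∨ (ProjEq2 u v' ∧ ProjEq2 v u') := by
  constructor
  · rintro ⟨c, hc, h⟩
    obtain ⟨h₁₁, h₂₂, hS⟩ := (piMap_eq_smul_iff c u v u' v').mp h
    have hprod : u'.1 * v'.2 * (u'.2 * v'.1) = c * (u.1 * v.2) * (c * (u.2 * v.1)) := by
      linear_combination u'.2 * v'.2 * h₁₁ + c * u.1 * v.1 * h₂₂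
    rcases eq_and_eq_or_eq_and_eq_of_add_eq_add_of_mul_eq_mul (by linear_combination hS) hprod
      with ⟨h₁₂, h₂₁⟩ | ⟨h₁₂, h₂₁⟩
    · exact .inl (projEq2_and_projEq2_of_mul_eq_mul hu hv hc h₁₁ h₁₂ h₂₁ h₂₂)
    · obtain ⟨hvu', huv'⟩ := projEq2_and_projEq2_of_mul_eq_mul (u' := u') (v' := v') hv hu hc
        (by linear_combination h₁₁) (by linear_combination h₁₂) (by linear_combination h₂₁)
        (by linear_combination h₂₂)
      exact .inr ⟨huv', hvu'⟩
  · rintro (⟨⟨a, ha, rfl⟩, ⟨b, hb, rfl⟩⟩ | ⟨⟨a, ha, rfl⟩, ⟨b, hb, rfl⟩⟩)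
    · exact ⟨a * b, mul_ne_zero ha hb, piMap_smul_smul a b u v⟩
    · exact ⟨b * a, mul_ne_zero hb ha, by rw [piMap_comm, piMap_smul_smul, mul_comm]⟩

/-- The fibers of the induced map `ℂP¹ × ℂP¹ → ℂP²` are the orbits of the
factor-switching involution `ϱ(u,v) = (v,u)`. -/
theorem stmt3 (u v u' v' : ℂ × ℂ) (hu : u ≠ 0) (hv : v ≠ 0)
    (hu' : u' ≠ 0) (hv' : v' ≠ 0) :
    ProjEq3 (PiMap u v) (PiMap u' v') ↔
      (ProjEq2 u u' ∧ ProjEq2 v v') ∨ (ProjEq2 u v' ∧ ProjEq2 v u') :=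
  stmt3_general u v u' v' hu hv
end

section
/- Each factor line of ℂP¹ × ℂP¹ is mapped by Π isomorphically onto a tangent line of the conic Q. Precisely: fix a nonzero u ∈ ℂ², and set a = Π(u,u). Then (i) a₁·Π(u,v)₁ + a₂·Π(u,v)₂ + a₃·Π(u,v)₃ = 0 for every v ∈ ℂ²; (ii) a₁² + a₂² + a₃² = 0; and (iii) the well-defined map ℂP¹ → ℂP², [v] ↦ [Π(u,v)], is a bijection from ℂP¹ onto the projective line L_u = {[z] ∈ ℂP² : a₁z₁ + a₂z₂ + a₃z₃ = 0}. -/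
/-!
For fixed `u`, `v ↦ Π(u,v)` is a linear map `ℂ² → ℂ³`, injective as soon as `u ≠ 0`. Its image
is therefore a plane, and it lies in the kernel of the functional `z ↦ a₁z₁ + a₂z₂ + a₃z₃` with
`a = Π(u,u)` (a polynomial identity). That functional is nonzero because `a = Π(u,u) ≠ 0`, so
its kernel is a plane too, and the two planes coincide: projectively, `[v] ↦ [Π(u,v)]` is a
bijection of `ℂP¹` onto the line `L_u`.
-/

noncomputable def piMapRight (u : ℂ × ℂ) : ℂ × ℂ →ₗ[ℂ] ℂ × ℂ × ℂ where
  toFun := PiMap u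
  map_add' v w := by
    simp only [PiMap, Prod.fst_add, Prod.snd_add, Prod.mk_add_mk, Prod.mk.injEq]
    refine ⟨by ring, by ring, by ring⟩
  map_smul' c v := by
    simp only [PiMap, Prod.smul_fst, Prod.smul_snd, smul_eq_mul, RingHom.id_apply,
      Prod.smul_mk, Prod.mk.injEq]
    refine ⟨by ring, by ring, by ring⟩

@[simp]
lemma piMapRight_apply (u v : ℂ × ℂ) : piMapRight u v = PiMap u v := rfl

def lineForm (a : ℂ × ℂ × ℂ) : Module.Dual ℂ (ℂ × ℂ × ℂ) where
  toFun z := a.1 * z.1 + a.2.1 * z.2.1 + a.2.2 * z.2.2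
  map_add' z w := by simp only [Prod.fst_add, Prod.snd_add]; ring
  map_smul' c z := by
    simp only [Prod.smul_fst, Prod.smul_snd, smul_eq_mul, RingHom.id_apply]; ring

@[simp]
lemma lineForm_apply (a z : ℂ × ℂ × ℂ) :
    lineForm a z = a.1 * z.1 + a.2.1 * z.2.1 + a.2.2 * z.2.2 := rfl

lemma piMap_eq_zero_iff {u v : ℂ × ℂ} (hu : u ≠ 0) : PiMap u v = 0 ↔ v = 0 := by
  refine ⟨fun h => ?_, fun h => by simp [h, PiMap]⟩
  simp only [PiMap, Prod.ext_iff, Prod.fst_zero, Prod.snd_zero, mul_eq_zero,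
    Complex.I_ne_zero, false_or] at h ⊢
  obtain ⟨hsum, hdiff, hmixed⟩ := h
  have h₁ : u.1 * v.1 = 0 := by linear_combination (hsum + hdiff) / 2
  have h₂ : u.2 * v.2 = 0 := by linear_combination (hsum - hdiff) / 2
  have h₃ : u.1 ^ 2 * v.2 = 0 := by linear_combination u.1 * hmixed - u.2 * h₁
  have h₄ : u.2 ^ 2 * v.1 = 0 := by linear_combination u.2 * hmixed - u.1 * h₂
  have hu' : ¬(u.1 = 0 ∧ u.2 = 0) := fun h => hu (Prod.ext h.1 h.2)
  simp only [mul_eq_zero, pow_eq_zero_iff two_ne_zero] at h₁ h₂ h₃ h₄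
  tauto

lemma piMapRight_injective {u : ℂ × ℂ} (hu : u ≠ 0) : Function.Injective (piMapRight u) :=
  (injective_iff_map_eq_zero _).2 fun _ => (piMap_eq_zero_iff hu).1

lemma lineForm_piMap_self (u v : ℂ × ℂ) : lineForm (PiMap u u) (PiMap u v) = 0 := by
  simp only [lineForm_apply, PiMap]
  linear_combination
    (u.1 * u.2 ^ 2 * v.1 + u.1 ^ 2 * u.2 * v.2 + u.1 ^ 3 * v.1 + u.2 ^ 3 * v.2) * Complex.I_mul_I

lemma piMap_self_isotropic (u : ℂ × ℂ) :
    (PiMap u u).1 ^ 2 + (PiMap u u).2.1 ^ 2 + (PiMap u u).2.2 ^ 2 = 0 := by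
  simp only [PiMap]
  linear_combination (u.1 * u.1 + u.2 * u.2) ^ 2 * Complex.I_mul_I

lemma lineForm_ne_zero {a : ℂ × ℂ × ℂ} (ha : a ≠ 0) : lineForm a ≠ 0 := by
  intro h
  have h₁ := LinearMap.congr_fun h (1, 0, 0)
  have h₂ := LinearMap.congr_fun h (0, 1, 0)
  have h₃ := LinearMap.congr_fun h (0, 0, 1)
  simp only [lineForm_apply, LinearMap.zero_apply, mul_zero, mul_one, add_zero, zero_add]
    at h₁ h₂ h₃
  exact ha (Prod.ext h₁ (Prod.ext h₂ h₃))

lemma range_piMapRight {u : ℂ × ℂ} (hu : u ≠ 0) :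
    LinearMap.range (piMapRight u) = LinearMap.ker (lineForm (PiMap u u)) := by
  refine Submodule.eq_of_le_of_finrank_eq ?_ ?_
  · rintro _ ⟨v, rfl⟩
    exact lineForm_piMap_self u v
  · have hker := Module.Dual.finrank_ker_add_one_of_ne_zero
      (lineForm_ne_zero ((piMap_eq_zero_iff hu).not.2 hu))
    rw [LinearMap.finrank_range_of_inj (piMapRight_injective hu)]
    simp only [Module.finrank_prod, Module.finrank_self] at hker ⊢
    omega

lemma projEq3_piMap_iff {u : ℂ × ℂ} (hu : u ≠ 0) (v v' : ℂ × ℂ) :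
    ProjEq3 (PiMap u v) (PiMap u v') ↔ ProjEq2 v v' := by
  refine exists_congr fun c => and_congr_right fun _ => ?_
  rw [← piMapRight_apply, ← piMapRight_apply, ← map_smul, (piMapRight_injective hu).eq_iff]

/-- Each factor line of `ℂP¹ × ℂP¹` is mapped by `Π` isomorphically onto a
tangent line of the conic `Q`.  Here `a = Π(u,u)`, and the tangent line is
`L_u = {[z] : a₁z₁ + a₂z₂ + a₃z₃ = 0}`. -/
theorem stmt5 (u : ℂ × ℂ) (hu : u ≠ 0) (a : ℂ × ℂ × ℂ) (ha : a = PiMap u u) :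
    -- (i) the factor line `{u} × ℂP¹` is mapped into the line `L_u`
    (∀ v : ℂ × ℂ,
      a.1 * (PiMap u v).1 + a.2.1 * (PiMap u v).2.1 + a.2.2 * (PiMap u v).2.2 = 0) ∧
    -- (ii) the dual coordinates `a` lie on the dual conic, i.e. `L_u` is tangent to `Q`
    a.1 ^ 2 + a.2.1 ^ 2 + a.2.2 ^ 2 = 0 ∧
    -- (iii) `[v] ↦ [Π(u,v)]` is a well-defined injection of `ℂP¹` into `ℂP²` ...
    (∀ v v' : ℂ × ℂ, v ≠ 0 → v' ≠ 0 →
      (PiMap u v ≠ 0 ∧ (ProjEq3 (PiMap u v) (PiMap u v') ↔ ProjEq2 v v'))) ∧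
    -- ... whose image is exactly the projective line `L_u`
    (∀ z : ℂ × ℂ × ℂ, z ≠ 0 → a.1 * z.1 + a.2.1 * z.2.1 + a.2.2 * z.2.2 = 0 →
      ∃ v : ℂ × ℂ, v ≠ 0 ∧ ProjEq3 (PiMap u v) z) := by
  subst ha
  refine ⟨lineForm_piMap_self u, piMap_self_isotropic u,
    fun v v' hv _ => ⟨(piMap_eq_zero_iff hu).not.2 hv, projEq3_piMap_iff hu v v'⟩,
    fun z hz hline => ?_⟩
  have hz_mem : z ∈ LinearMap.range (piMapRight u) := by
    rw [range_piMapRight hu]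
    exact hline
  obtain ⟨v, rfl⟩ := hz_mem
  refine ⟨v, fun hv => hz (by rw [hv, map_zero]), 1, one_ne_zero, (one_smul ℂ _).symm⟩
end

section
/- In the model case, the conjugation-invariant line through a point p of the conic meets the conic exactly in p and its conjugate: let p ∈ ℂ³ be nonzero with p₁² + p₂² + p₃² = 0, and let a ∈ ℝ³ be nonzero with a₁p₁ + a₂p₂ + a₃p₃ = 0. Then the set {[z] ∈ ℂP² : z₁² + z₂² + z₃² = 0 and a₁z₁ + a₂z₂ + a₃z₃ = 0} equals {[p], [p̄]}, and [p] ≠ [p̄]. -/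
/-!
The vectors `p` and `p̄` are isotropic for the bilinear form `z ⬝ w = z₁w₁ + z₂w₂ + z₃w₃`, while
`p ⬝ p̄ = ∑ |pᵢ|² ≠ 0`, so they are linearly independent. As `a` is real, both lie in the plane
`a ⬝ z = 0`, which they therefore span. On this plane `(x p + y p̄) ⬝ (x p + y p̄) = 2 x y (p ⬝ p̄)`,
which vanishes exactly on the two lines through `p` and `p̄`.
-/

open ComplexConjugate

/-- Componentwise complex conjugation on `ℂ³`. -/
noncomputable def Conj3 (z : ℂ × ℂ × ℂ) : ℂ × ℂ × ℂ :=
  (conj z.1, conj z.2.1, conj z.2.2)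

open Matrix Module

section Isotropic

variable {K : Type*} [Field K]

theorem linearIndependent_pair_of_dotProduct {n : Type*} [Fintype n] {p q : n → K}
    (hp : p ⬝ᵥ p = 0) (hq : q ⬝ᵥ q = 0) (hpq : p ⬝ᵥ q ≠ 0) : LinearIndependent K ![p, q] := by
  refine LinearIndependent.pair_iff.2 fun s t hst => ⟨?_, ?_⟩
  · have h := congrArg (· ⬝ᵥ q) hst
    simp only [add_dotProduct, smul_dotProduct, hq, smul_eq_mul, mul_zero, add_zero,
      zero_dotProduct] at h
    exact (mul_eq_zero.1 h).resolve_right hpq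
  · have h := congrArg (p ⬝ᵥ ·) hst
    simp only [dotProduct_add, dotProduct_smul, hp, smul_eq_mul, mul_zero, zero_add,
      dotProduct_zero] at h
    exact (mul_eq_zero.1 h).resolve_right hpq

theorem ker_dotProductEquiv_eq_span_pair {a p q : Fin 3 → K} (ha : a ≠ 0) (hap : a ⬝ᵥ p = 0)
    (haq : a ⬝ᵥ q = 0) (hpq : LinearIndependent K ![p, q]) :
    LinearMap.ker (dotProductEquiv K (Fin 3) a) = Submodule.span K {p, q} := by
  refine (Submodule.eq_of_le_of_finrank_eq (Submodule.span_le.2 ?_) ?_).symm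
  · rintro _ (rfl | rfl) <;> simpa
  · have := Dual.finrank_ker_add_one_of_ne_zero ((dotProductEquiv K (Fin 3)).map_ne_zero_iff.2 ha)
    rw [← Matrix.range_cons_cons_empty p q ![], finrank_span_eq_card hpq]
    simp only [finrank_fin_fun, Fintype.card_fin] at this ⊢
    omega

theorem dotProduct_self_eq_zero_and_dotProduct_eq_zero_iff [NeZero (2 : K)]
    {a p q z : Fin 3 → K} (hp : p ⬝ᵥ p = 0) (hq : q ⬝ᵥ q = 0) (hpq : p ⬝ᵥ q ≠ 0) (ha : a ≠ 0)
    (hap : a ⬝ᵥ p = 0) (haq : a ⬝ᵥ q = 0) :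
    z ⬝ᵥ z = 0 ∧ a ⬝ᵥ z = 0 ↔ (∃ c : K, z = c • p) ∨ ∃ c : K, z = c • q := by
  constructor
  · rintro ⟨hzz, haz⟩
    have hz : z ∈ Submodule.span K {p, q} := by
      rw [← ker_dotProductEquiv_eq_span_pair ha hap haq
        (linearIndependent_pair_of_dotProduct hp hq hpq)]
      simpa using haz
    obtain ⟨x, y, rfl⟩ := Submodule.mem_span_pair.1 hz
    have hxy : 2 * (p ⬝ᵥ q) * (x * y) = 0 := by
      rw [← hzz]
      simp only [dotProduct_add, add_dotProduct, dotProduct_smul, smul_dotProduct, hp, hq,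
        dotProduct_comm q p, smul_eq_mul]
      ring
    rcases (mul_eq_zero.1 hxy).resolve_left (mul_ne_zero two_ne_zero hpq) |> mul_eq_zero.1
      with rfl | rfl
    · exact .inr ⟨y, by simp⟩
    · exact .inl ⟨x, by simp⟩
  · rintro (⟨c, rfl⟩ | ⟨c, rfl⟩) <;> simp [hp, hq, hap, haq]

end Isotropic

section Vec3

variable {R : Type*}

def vec3 (z : R × R × R) : Fin 3 → R := ![z.1, z.2.1, z.2.2]

theorem vec3_injective : Function.Injective (vec3 : R × R × R → Fin 3 → R) := by
  rintro ⟨x₁, x₂, x₃⟩ ⟨y₁, y₂, y₃⟩ h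
  simp_all [vec3, funext_iff, Fin.forall_fin_succ]

theorem vec3_dotProduct_vec3 [Mul R] [AddCommMonoid R] (z w : R × R × R) :
    vec3 z ⬝ᵥ vec3 w = z.1 * w.1 + z.2.1 * w.2.1 + z.2.2 * w.2.2 := by
  simp [vec3, dotProduct, Fin.sum_univ_three, add_assoc]

theorem vec3_smul [SMul R R] (c : R) (z : R × R × R) : vec3 (c • z) = c • vec3 z := by
  ext i; fin_cases i <;> rfl

theorem vec3_eq_zero [Zero R] {z : R × R × R} : vec3 z = 0 ↔ z = 0 :=
  vec3_injective.eq_iff' (by ext i; fin_cases i <;> rfl)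

theorem vec3_dotProduct_self [Semiring R] (z : R × R × R) :
    vec3 z ⬝ᵥ vec3 z = z.1 ^ 2 + z.2.1 ^ 2 + z.2.2 ^ 2 := by
  simp only [vec3_dotProduct_vec3, sq]

end Vec3

theorem vec3_conj3 (z : ℂ × ℂ × ℂ) : vec3 (Conj3 z) = star (vec3 z) := by
  ext i; fin_cases i <;> rfl

theorem projEq3_iff_vec3_eq_smul {z w : ℂ × ℂ × ℂ} (hw : w ≠ 0) :
    ProjEq3 z w ↔ ∃ c : ℂ, vec3 w = c • vec3 z := by
  simp only [← vec3_smul, vec3_injective.eq_iff, ProjEq3]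
  refine ⟨fun ⟨c, _, h⟩ => ⟨c, h⟩, fun ⟨c, h⟩ => ⟨c, ?_, h⟩⟩
  rintro rfl
  exact hw (by simpa using h)

/-- The conjugation-invariant line through a point `p` of the conic meets the
conic exactly in `p` and its conjugate `p̄`, and these two points are distinct. -/
theorem stmt12 (p : ℂ × ℂ × ℂ) (hp : p ≠ 0)
    (hpQ : p.1 ^ 2 + p.2.1 ^ 2 + p.2.2 ^ 2 = 0)
    (a : ℝ × ℝ × ℝ) (ha : a ≠ 0)
    (hline : (a.1 : ℂ) * p.1 + (a.2.1 : ℂ) * p.2.1 + (a.2.2 : ℂ) * p.2.2 = 0) :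
    (∀ z : ℂ × ℂ × ℂ, z ≠ 0 →
      ((z.1 ^ 2 + z.2.1 ^ 2 + z.2.2 ^ 2 = 0 ∧
        (a.1 : ℂ) * z.1 + (a.2.1 : ℂ) * z.2.1 + (a.2.2 : ℂ) * z.2.2 = 0) ↔
       (ProjEq3 p z ∨ ProjEq3 (Conj3 p) z))) ∧
    ¬ ProjEq3 p (Conj3 p) := by
  set A := vec3 ((a.1 : ℂ), (a.2.1 : ℂ), (a.2.2 : ℂ))
  set P := vec3 p
  have hA : A ≠ 0 := by
    simpa [A, vec3_eq_zero, Prod.ext_iff] using ha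
  have hAP : A ⬝ᵥ P = 0 := by rwa [vec3_dotProduct_vec3]
  have hPP : P ⬝ᵥ P = 0 := by rwa [vec3_dotProduct_self]
  have hPPbar : P ⬝ᵥ star P ≠ 0 := by
    open ComplexOrder in exact dotProduct_self_star_eq_zero.not.2 (vec3_eq_zero.not.2 hp)
  have hAPbar : A ⬝ᵥ star P = 0 := by
    have hAreal : star A = A := by ext i; fin_cases i <;> simp [A, vec3]
    rw [← hAreal, star_dotProduct_star, dotProduct_comm, hAP, star_zero]
  have hPbarPbar : star P ⬝ᵥ star P = 0 := by rw [star_dotProduct_star, hPP, star_zero]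
  refine ⟨fun z hz => ?_, fun ⟨c, _, hc⟩ => hPPbar ?_⟩
  · have hAz : A ⬝ᵥ vec3 z = _ := vec3_dotProduct_vec3 _ z
    rw [projEq3_iff_vec3_eq_smul hz, projEq3_iff_vec3_eq_smul hz, vec3_conj3,
      ← vec3_dotProduct_self, ← hAz]
    exact dotProduct_self_eq_zero_and_dotProduct_eq_zero_iff hPP hPbarPbar hPPbar hA hAP hAPbar
  · rw [← vec3_conj3, hc, vec3_smul, dotProduct_smul, hPP, smul_zero]
end

section
/- The anti-diagonal of ℂP¹ × ℂP¹ is mapped by Π two-to-one onto the standard ℝP² ⊂ ℂP². Precisely, for u = (u₁,u₂) ∈ ℂ² nonzero set σ(u) = (−ū₂, ū₁). Then: (i) Π(u, σ(u)) is a nonzero vector all three of whose coordinates are real; (ii) for every nonzero real x ∈ ℝ³ there is a nonzero u ∈ ℂ² with [Π(u,σ(u))] = [x] in ℂP²; and (iii) for nonzero u, u′ ∈ ℂ², [Π(u,σ(u))] = [Π(u′,σ(u′))] if and only if [u′] = [u] or [u′] = [σ(u)] in ℂP¹, and [σ(u)] ≠ [u], so each fiber has exactly two elements. -/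
open ComplexConjugate

/-- The antipodal map `σ(u) = (−ū₂, ū₁)` of `ℂ²`, covering the antipodal
involution of `ℂP¹`. -/
noncomputable def SigmaMap (u : ℂ × ℂ) : ℂ × ℂ := (-(conj u.2), conj u.1)

/-- Inclusion `ℝ³ ⊆ ℂ³`. -/
noncomputable def RealVec3 (x : ℝ × ℝ × ℝ) : ℂ × ℂ × ℂ :=
  ((x.1 : ℂ), (x.2.1 : ℂ), (x.2.2 : ℂ))

/-!
`Π(u, σ u)` is the real vector `hopf u = (2 Im u₁ū₂, -2 Re u₁ū₂, |u₁|² - |u₂|²)`, a form of the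
Hopf map, with `|hopf u| = |u|²`, `hopf (c u) = |c|² hopf u` and `hopf (σ u) = -hopf u`.
A complex multiple of a nonzero real vector that is again real is a real multiple, so
`[Π(u, σ u)] = [Π(v, σ v)]` means `hopf v = r hopf u` with `r` real and nonzero. The sign of `r` is
absorbed by `σ`, and for `r > 0` the norm identity gives `|vᵢ|² = r |uᵢ|²` and `v₁v̄₂ = r u₁ū₂`,
which pin `v` down to a multiple of `u`. A preimage of `x ∈ ℝ³` with `|x| = r` is
`(r + x₃, -x₂ - i x₁)`, or `σ` of the one for `-x` when `r + x₃ = 0`. Finally `σ u = c u` would give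
`-hopf u = |c|² hopf u`.
-/

open Complex

noncomputable def hopf (u : ℂ × ℂ) : ℝ × ℝ × ℝ :=
  (2 * (u.1 * conj u.2).im, -2 * (u.1 * conj u.2).re, normSq u.1 - normSq u.2)

theorem piMap_sigmaMap (u : ℂ × ℂ) : PiMap u (SigmaMap u) = RealVec3 (hopf u) := by
  simp only [PiMap, SigmaMap, RealVec3, hopf, Prod.mk.injEq]
  refine ⟨?_, ?_, ?_⟩ <;>
  · apply Complex.ext <;>
    simp only [mul_re, mul_im, add_re, add_im, sub_re, sub_im, neg_re, neg_im, conj_re, conj_im, I_re, I_im,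
      ofReal_re, ofReal_im, normSq_apply] <;>
    ring

theorem hopf_sq_sum (u : ℂ × ℂ) :
    (hopf u).1 ^ 2 + (hopf u).2.1 ^ 2 + (hopf u).2.2 ^ 2 = (normSq u.1 + normSq u.2) ^ 2 := by
  simp only [hopf, normSq_apply, mul_re, mul_im, conj_re, conj_im]
  ring

theorem normSq_add_normSq_pos {u : ℂ × ℂ} (hu : u ≠ 0) : 0 < normSq u.1 + normSq u.2 := by
  by_cases h : u.1 = 0
  · have h2 : u.2 ≠ 0 := fun h2 => hu (Prod.ext h h2)
    exact add_pos_of_nonneg_of_pos (normSq_nonneg _) (normSq_pos.mpr h2)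
  · exact add_pos_of_pos_of_nonneg (normSq_pos.mpr h) (normSq_nonneg _)

theorem hopf_ne_zero {u : ℂ × ℂ} (hu : u ≠ 0) : hopf u ≠ 0 := by
  intro h
  have := hopf_sq_sum u
  rw [h] at this
  simp only [Prod.fst_zero, Prod.snd_zero] at this
  nlinarith [normSq_add_normSq_pos hu]

theorem hopf_smul (c : ℂ) (u : ℂ × ℂ) : hopf (c • u) = normSq c • hopf u := by
  have h : c * u.1 * conj (c * u.2) = normSq c * (u.1 * conj u.2) := by
    rw [map_mul, ← mul_conj]; ring
  simp only [hopf, Prod.smul_fst, Prod.smul_snd, smul_eq_mul, Prod.smul_mk, h, re_ofReal_mul,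
    im_ofReal_mul, normSq_mul]
  ext <;> simp only <;> ring

theorem hopf_sigmaMap (u : ℂ × ℂ) : hopf (SigmaMap u) = -hopf u := by
  simp only [hopf, SigmaMap, Prod.neg_mk, normSq_neg, normSq_conj, Prod.mk.injEq]
  refine ⟨?_, ?_, by ring⟩ <;> simp only [mul_re, mul_im, neg_re, neg_im, conj_re, conj_im] <;> ring

theorem sigmaMap_ne_zero {u : ℂ × ℂ} (hu : u ≠ 0) : SigmaMap u ≠ 0 := by
  contrapose! hu
  simpa [SigmaMap, Prod.ext_iff, and_comm] using hu

theorem realVec3_smul (r : ℝ) (x : ℝ × ℝ × ℝ) : RealVec3 (r • x) = (r : ℂ) • RealVec3 x := by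
  simp [RealVec3]

theorem realVec3_ne_zero {x : ℝ × ℝ × ℝ} (hx : x ≠ 0) : RealVec3 x ≠ 0 := by
  contrapose! hx
  simpa [RealVec3, Prod.ext_iff] using hx

theorem projEq3_realVec3_of_eq_smul {x y : ℝ × ℝ × ℝ} {r : ℝ} (hr : r ≠ 0) (h : y = r • x) :
    ProjEq3 (RealVec3 x) (RealVec3 y) :=
  ⟨r, ofReal_ne_zero.mpr hr, by rw [h, realVec3_smul]⟩

theorem exists_eq_smul_of_projEq3_realVec3 {x y : ℝ × ℝ × ℝ} (hx : x ≠ 0)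
    (h : ProjEq3 (RealVec3 x) (RealVec3 y)) : ∃ r : ℝ, r ≠ 0 ∧ y = r • x := by
  obtain ⟨c, hc, h⟩ := h
  simp only [RealVec3, Prod.smul_mk, smul_eq_mul, Prod.mk.injEq, Complex.ext_iff, mul_re,
    mul_im, ofReal_re, ofReal_im, mul_zero, sub_zero, zero_add] at h
  obtain ⟨⟨h1, h1'⟩, ⟨h2, h2'⟩, ⟨h3, h3'⟩⟩ := h
  have hc_im : c.im = 0 := by
    refine (smul_eq_zero.mp (?_ : c.im • x = 0)).resolve_right hx
    ext <;> simp only [Prod.smul_fst, Prod.smul_snd, smul_eq_mul, Prod.fst_zero, Prod.snd_zero] <;>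
      linarith
  exact ⟨c.re, fun hre => hc (Complex.ext hre hc_im), Prod.ext h1 (Prod.ext h2 h3)⟩

theorem normSq_eq_of_hopf_eq_smul {u v : ℂ × ℂ} {r : ℝ} (hr : 0 ≤ r) (h : hopf v = r • hopf u) :
    normSq v.1 = r * normSq u.1 ∧ normSq v.2 = r * normSq u.2 ∧
      v.1 * conj v.2 = r * (u.1 * conj u.2) := by
  have hN : normSq v.1 + normSq v.2 = r * (normSq u.1 + normSq u.2) := by
    have hNu := add_nonneg (normSq_nonneg u.1) (normSq_nonneg u.2)
    have hNv := add_nonneg (normSq_nonneg v.1) (normSq_nonneg v.2)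
    rw [← sq_eq_sq₀ hNv (mul_nonneg hr hNu), mul_pow, ← hopf_sq_sum, ← hopf_sq_sum, h]
    simp only [Prod.smul_fst, Prod.smul_snd, smul_eq_mul]
    ring
  simp only [hopf, Prod.smul_mk, smul_eq_mul, Prod.mk.injEq] at h
  obtain ⟨h1, h2, h3⟩ := h
  refine ⟨by linarith, by linarith, Complex.ext ?_ ?_⟩
  · rw [re_ofReal_mul]; linarith
  · rw [im_ofReal_mul]; linarith

theorem eq_mul_of_mul_conj_eq {a b z w c : ℂ} (hb : b ≠ 0) (h : w * conj b = c * (z * conj a)) :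
    w = c * conj a / conj b * z := by
  have : conj b ≠ 0 := by simpa using hb
  field_simp
  linear_combination h

theorem projEq2_of_mul_conj_eq {u v : ℂ × ℂ} {r : ℝ} (hu : u ≠ 0) (hr : 0 < r)
    (h1 : normSq v.1 = r * normSq u.1) (h2 : normSq v.2 = r * normSq u.2)
    (h12 : v.1 * conj v.2 = r * (u.1 * conj u.2)) : ProjEq2 u v := by
  have h1' : v.1 * conj v.1 = r * (u.1 * conj u.1) := by simp only [mul_conj, h1]; push_cast; ring
  have h2' : v.2 * conj v.2 = r * (u.2 * conj u.2) := by simp only [mul_conj, h2]; push_cast; ring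
  have h21 : v.2 * conj v.1 = r * (u.2 * conj u.1) := by
    simpa [mul_comm] using congrArg conj h12
  have hr' : (r : ℂ) ≠ 0 := ofReal_ne_zero.mpr hr.ne'
  by_cases hu1 : u.1 = 0
  · have hu2 : u.2 ≠ 0 := fun hu2 => hu (Prod.ext hu1 hu2)
    have hv2 : v.2 ≠ 0 :=
      normSq_pos.mp (h2 ▸ mul_pos hr (normSq_pos.mpr hu2))
    refine ⟨r * conj u.2 / conj v.2, by simp [hr', hu2, hv2], Prod.ext ?_ ?_⟩
    · exact eq_mul_of_mul_conj_eq hv2 h12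
    · exact eq_mul_of_mul_conj_eq hv2 h2'
  · have hv1 : v.1 ≠ 0 := by
      exact normSq_pos.mp (h1 ▸ mul_pos hr (normSq_pos.mpr hu1))
    refine ⟨r * conj u.1 / conj v.1, by simp [hr', hu1, hv1], Prod.ext ?_ ?_⟩
    · exact eq_mul_of_mul_conj_eq hv1 h1'
    · exact eq_mul_of_mul_conj_eq hv1 h21

theorem projEq2_of_hopf_eq_smul {u v : ℂ × ℂ} {r : ℝ} (hu : u ≠ 0) (hr : 0 < r)
    (h : hopf v = r • hopf u) : ProjEq2 u v :=
  let ⟨h1, h2, h12⟩ := normSq_eq_of_hopf_eq_smul hr.le h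
  projEq2_of_mul_conj_eq hu hr h1 h2 h12

theorem projEq3_hopf_iff {u v : ℂ × ℂ} (hu : u ≠ 0) :
    ProjEq3 (RealVec3 (hopf u)) (RealVec3 (hopf v)) ↔ ProjEq2 u v ∨ ProjEq2 (SigmaMap u) v := by
  constructor
  · intro h
    obtain ⟨r, hr, hv⟩ := exists_eq_smul_of_projEq3_realVec3 (hopf_ne_zero hu) h
    rcases hr.lt_or_gt with hr | hr
    · refine .inr (projEq2_of_hopf_eq_smul (sigmaMap_ne_zero hu) (neg_pos.mpr hr) ?_)
      rw [hv, hopf_sigmaMap, smul_neg, neg_smul, neg_neg]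
    · exact .inl (projEq2_of_hopf_eq_smul hu hr hv)
  · rintro (⟨a, ha, rfl⟩ | ⟨a, ha, rfl⟩)
    · exact projEq3_realVec3_of_eq_smul (normSq_pos.mpr ha).ne' (hopf_smul a u)
    · refine projEq3_realVec3_of_eq_smul (neg_ne_zero.mpr (normSq_pos.mpr ha).ne') ?_
      rw [hopf_smul, hopf_sigmaMap, smul_neg, neg_smul]

theorem not_projEq2_sigmaMap {u : ℂ × ℂ} (hu : u ≠ 0) : ¬ ProjEq2 u (SigmaMap u) := by
  rintro ⟨c, -, hc⟩
  have h := congrArg hopf hc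
  rw [hopf_sigmaMap, hopf_smul] at h
  have h' : (normSq c + 1) • hopf u = 0 := by rw [add_smul, one_smul, ← h, neg_add_cancel]
  exact hopf_ne_zero hu
    ((smul_eq_zero.mp h').resolve_left (add_pos_of_nonneg_of_pos (normSq_nonneg c) one_pos).ne')

theorem hopf_eq_smul_of_sq_eq {x₁ x₂ x₃ r : ℝ} (hr : r ^ 2 = x₁ ^ 2 + x₂ ^ 2 + x₃ ^ 2) :
    hopf (((r + x₃ : ℝ) : ℂ), ⟨-x₂, -x₁⟩) = (2 * (r + x₃)) • (x₁, x₂, x₃) := by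
  simp only [hopf, Prod.smul_mk, smul_eq_mul, Prod.mk.injEq]
  refine ⟨?_, ?_, ?_⟩
  · simp only [mul_im, ofReal_re, ofReal_im, conj_re, conj_im]; ring
  · simp only [mul_re, ofReal_re, ofReal_im, conj_re, conj_im]; ring
  · simp only [normSq_ofReal, normSq_mk]
    linear_combination hr

theorem exists_hopf_eq_smul_of_add_ne_zero {x₁ x₂ x₃ r : ℝ}
    (hr : r ^ 2 = x₁ ^ 2 + x₂ ^ 2 + x₃ ^ 2) (h : r + x₃ ≠ 0) :
    ∃ u : ℂ × ℂ, u ≠ 0 ∧ ∃ k : ℝ, k ≠ 0 ∧ hopf u = k • (x₁, x₂, x₃) :=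
  ⟨_, fun h0 => h (ofReal_eq_zero.mp (congrArg Prod.fst h0)), _, mul_ne_zero two_ne_zero h,
    hopf_eq_smul_of_sq_eq hr⟩

theorem exists_hopf_eq_smul {x : ℝ × ℝ × ℝ} (hx : x ≠ 0) :
    ∃ u : ℂ × ℂ, u ≠ 0 ∧ ∃ k : ℝ, k ≠ 0 ∧ hopf u = k • x := by
  obtain ⟨x₁, x₂, x₃⟩ := x
  set r := √(x₁ ^ 2 + x₂ ^ 2 + x₃ ^ 2)
  have hr : r ^ 2 = x₁ ^ 2 + x₂ ^ 2 + x₃ ^ 2 := Real.sq_sqrt (by positivity)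
  have hr0 : 0 < r := by
    refine Real.sqrt_pos.mpr (lt_of_le_of_ne (by positivity) fun h0 => hx ?_)
    simp only [Prod.mk_eq_zero]
    refine ⟨?_, ?_, ?_⟩ <;> nlinarith [sq_nonneg x₁, sq_nonneg x₂, sq_nonneg x₃]
  by_cases h : r + x₃ = 0
  · obtain ⟨u, hu, k, hk, hku⟩ :=
      exists_hopf_eq_smul_of_add_ne_zero (x₁ := -x₁) (x₂ := -x₂) (x₃ := -x₃) (by rw [hr]; ring)
        (by linarith)
    refine ⟨SigmaMap u, sigmaMap_ne_zero hu, k, hk, ?_⟩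
    rw [hopf_sigmaMap, hku, ← smul_neg, Prod.neg_mk, Prod.neg_mk, neg_neg, neg_neg, neg_neg]
  · exact exists_hopf_eq_smul_of_add_ne_zero hr h

/-- The anti-diagonal `{(u, σ(u))}` of `ℂP¹ × ℂP¹` is mapped by `Π` two-to-one
onto the standard `ℝP² ⊂ ℂP²`. -/
theorem stmt13 :
    -- (i) `Π(u, σ(u))` is a nonzero vector with all three coordinates real
    (∀ u : ℂ × ℂ, u ≠ 0 →
      PiMap u (SigmaMap u) ≠ 0 ∧
      (PiMap u (SigmaMap u)).1.im = 0 ∧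
      (PiMap u (SigmaMap u)).2.1.im = 0 ∧
      (PiMap u (SigmaMap u)).2.2.im = 0) ∧
    -- (ii) every class of a nonzero real vector is in the image of the anti-diagonal
    (∀ x : ℝ × ℝ × ℝ, x ≠ 0 →
      ∃ u : ℂ × ℂ, u ≠ 0 ∧ ProjEq3 (PiMap u (SigmaMap u)) (RealVec3 x)) ∧
    -- (iii) the fibers are exactly the pairs `{[u], [σ(u)]}`, and these two
    -- points of `ℂP¹` are always distinct, so each fiber has exactly two elements
    (∀ u u' : ℂ × ℂ, u ≠ 0 → u' ≠ 0 →
      (ProjEq3 (PiMap u (SigmaMap u)) (PiMap u' (SigmaMap u')) ↔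
        (ProjEq2 u u' ∨ ProjEq2 (SigmaMap u) u'))) ∧
    (∀ u : ℂ × ℂ, u ≠ 0 → ¬ ProjEq2 u (SigmaMap u)) := by
  refine ⟨fun u hu => ?_, fun x hx => ?_, fun u u' hu _ => ?_, fun u hu => not_projEq2_sigmaMap hu⟩
  · simp only [piMap_sigmaMap]
    exact ⟨realVec3_ne_zero (hopf_ne_zero hu), ofReal_im _, ofReal_im _, ofReal_im _⟩
  · obtain ⟨u, hu, k, hk, h⟩ := exists_hopf_eq_smul hx
    refine ⟨u, hu, piMap_sigmaMap u ▸ projEq3_realVec3_of_eq_smul (inv_ne_zero hk) ?_⟩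
    rw [h, smul_smul, inv_mul_cancel₀ hk, one_smul]
  · rw [piMap_sigmaMap, piMap_sigmaMap]
    exact projEq3_hopf_iff hu
end
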